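/- Let T be a triangulated category with a semi-orthogonal decomposition T = ⟨N₁, …, Nₙ⟩. Then the Grothendieck group K₀(T) decomposes as a direct sum K₀(N₁) ⊕ ⋯ ⊕ K₀(Nₙ), with the isomorphism induced by the inclusions Nᵣ ⊆ T. -/

import Mathlib

open CategoryTheory Limits Pretriangulated ZeroObject DirectSum

universe v u

variable (C : Type u) [Category.{v} C] [Preadditive C] [HasZeroObject C]
  [HasShift C ℤ] [∀ n : ℤ, (CategoryTheory.shiftFunctor C n).Additive]
  [Pretriangulated C]

/-- The subgroup of relations `[Y] = [X] + [Z]` coming from distinguished triangles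
`X → Y → Z → X[1]`. -/
def K0relations : AddSubgroup (FreeAbelianGroup C) :=
  AddSubgroup.closure {x | ∃ Tr : Triangle C, Tr ∈ (distTriang C) ∧
    x = FreeAbelianGroup.of Tr.obj₂ - FreeAbelianGroup.of Tr.obj₁ -
      FreeAbelianGroup.of Tr.obj₃}

/-- The Grothendieck group `K₀` of a triangulated category: the free abelian group on
the objects modulo the relations `[Y] = [X] + [Z]` for distinguished triangles. -/
abbrev K0 : Type u := FreeAbelianGroup C ⧸ K0relations C

variable {C}

/-- Relations for the Grothendieck group of a full triangulated subcategory on a class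
of objects `S`: the triangles of `C` all of whose objects lie in `S`. -/
def K0relationsIn (S : Set C) : AddSubgroup (FreeAbelianGroup ↥S) :=
  AddSubgroup.closure {x | ∃ Tr : Triangle C, Tr ∈ (distTriang C) ∧
    ∃ (h1 : Tr.obj₁ ∈ S) (h2 : Tr.obj₂ ∈ S) (h3 : Tr.obj₃ ∈ S),
    x = FreeAbelianGroup.of (⟨Tr.obj₂, h2⟩ : ↥S) - FreeAbelianGroup.of ⟨Tr.obj₁, h1⟩ -
      FreeAbelianGroup.of ⟨Tr.obj₃, h3⟩}

/-- The Grothendieck group of the full triangulated subcategory on `S`. -/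
abbrev K0In (S : Set C) : Type u := FreeAbelianGroup ↥S ⧸ K0relationsIn S

/-- The homomorphism `FreeAbelianGroup S → K₀(C)` sending a generator to the class of
the underlying object. -/
def toK0 (S : Set C) : FreeAbelianGroup ↥S →+ K0 C :=
  (QuotientAddGroup.mk' (K0relations C)).comp
    (FreeAbelianGroup.lift (fun x => FreeAbelianGroup.of (x : C)))

/-- The homomorphism `K₀(N) → K₀(C)` induced by the inclusion `N ⊆ C` of a full
triangulated subcategory on the class of objects `S`. -/
def K0inclusion (S : Set C) : K0In S →+ K0 C :=
  QuotientAddGroup.lift (K0relationsIn S) (toK0 S) (by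
    intro x hx
    have hle : K0relationsIn S ≤ (toK0 S).ker := by
      refine (AddSubgroup.closure_le _).mpr ?_
      rintro x ⟨Tr, hTr, h1, h2, h3, rfl⟩
      have : toK0 S (FreeAbelianGroup.of (⟨Tr.obj₂, h2⟩ : ↥S) -
          FreeAbelianGroup.of ⟨Tr.obj₁, h1⟩ - FreeAbelianGroup.of ⟨Tr.obj₃, h3⟩) = 0 := by
        simp only [toK0, map_sub, AddMonoidHom.comp_apply, FreeAbelianGroup.lift_apply_of]
        rw [← map_sub, ← map_sub, QuotientAddGroup.mk'_apply, QuotientAddGroup.eq_zero_iff]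
        exact AddSubgroup.subset_closure ⟨Tr, hTr, rfl⟩
      exact this
    exact hle hx)

/-- The map `⊕ᵣ K₀(Nᵣ) → K₀(C)` induced by the inclusions. -/
noncomputable def sodK0Map {n : ℕ} (N : Fin n → Set C) :
    (⨁ r : Fin n, K0In (N r)) →+ K0 C :=
  DirectSum.toAddMonoid (fun r => K0inclusion (N r))

/-- A class of objects of `C` forming a full triangulated subcategory. -/
structure IsTriangulatedSet (P : Set C) : Prop where
  isoClosed : ∀ {X Y : C}, (X ≅ Y) → X ∈ P → Y ∈ P
  zero : (0 : C) ∈ P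
  shift : ∀ (X : C) (n : ℤ), X ∈ P → X⟦n⟧ ∈ P
  ext₂ : ∀ (Tr : Triangle C), Tr ∈ (distTriang C) → Tr.obj₁ ∈ P → Tr.obj₃ ∈ P →
    Tr.obj₂ ∈ P

/-- `sodFilt f r` is the `r`-th step `T_r` of the filtration associated to a
semi-orthogonal decomposition with components `f 0, f 1, …`: `T_0 = 0` and every object
of `T_{r+1}` fits in a distinguished triangle `b → X → a → b[1]` with `b ∈ f r` and
`a ∈ T_r`. -/
def sodFilt (f : ℕ → Set C) : ℕ → Set C
  | 0 => {X | IsZero X}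
  | (r + 1) => {X | ∃ (B A : C) (u : B ⟶ X) (v : X ⟶ A) (w : A ⟶ B⟦(1 : ℤ)⟧),
      Triangle.mk u v w ∈ (distTriang C) ∧ B ∈ f r ∧ A ∈ sodFilt f r}

/-!
Write `T_r` for the filtration `sodFilt` and `P = N_r`. Every `X ∈ T_{r+1}` sits in a
distinguished triangle `B → X → A` with `B ∈ P` and `A ∈ T_r`, and semi-orthogonality gives
`Hom(P, T_r) = 0`. Hence `Hom(W, B) ≅ Hom(W, X)` for `W ∈ P` and `Hom(A, W) ≅ Hom(X, W)` for `W`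
right orthogonal to `P`, and the five lemma for these two functors shows that the `B`-parts and
the `A`-parts of the vertices of a distinguished triangle again form distinguished triangles.
By induction on `r`, `X ↦ [B] + φ_r(A)` (`gradedClass`) is thus a well-defined additive
function `φ_{r+1}` on `T_{r+1}` with values in `⨁ⱼ K₀(N_j)`. For `r = n` it descends to `K₀(T)`;
it sends the class of `X ∈ N_j` to the `j`-th summand, and the inclusions map `φ_n(X)` back to
`[X]`, so it is inverse to the map induced by the inclusions.
-/

namespace K0

def of (X : C) : K0 C := QuotientAddGroup.mk (FreeAbelianGroup.of X)

lemma of_obj₂ (T : Triangle C) (hT : T ∈ distTriang C) :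
    of T.obj₂ = of T.obj₁ + of T.obj₃ := by
  rw [← sub_eq_zero, ← sub_sub]
  exact (QuotientAddGroup.eq_zero_iff _).2 (AddSubgroup.subset_closure ⟨T, hT, rfl⟩)

variable {G : Type*} [AddCommGroup G]

def lift (φ : C → G) (hφ : ∀ T ∈ distTriang C, φ T.obj₂ = φ T.obj₁ + φ T.obj₃) :
    K0 C →+ G :=
  QuotientAddGroup.lift _ (FreeAbelianGroup.lift φ) <| (AddSubgroup.closure_le _).2 <| by
    rintro _ ⟨T, hT, rfl⟩
    simp [hφ T hT]

@[simp]
lemma lift_of (φ : C → G) (hφ : ∀ T ∈ distTriang C, φ T.obj₂ = φ T.obj₁ + φ T.obj₃)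
    (X : C) : lift φ hφ (of X) = φ X :=
  FreeAbelianGroup.lift_apply_of _ _

lemma hom_ext {f g : K0 C →+ G} (h : ∀ X, f (of X) = g (of X)) : f = g :=
  QuotientAddGroup.addMonoidHom_ext _ (FreeAbelianGroup.lift_ext _ _ h)

end K0

namespace K0In

def of (S : Set C) {X : C} (hX : X ∈ S) : K0In S :=
  QuotientAddGroup.mk (FreeAbelianGroup.of ⟨X, hX⟩)

lemma of_obj₂ (S : Set C) (T : Triangle C) (hT : T ∈ distTriang C)
    (h₁ : T.obj₁ ∈ S) (h₂ : T.obj₂ ∈ S) (h₃ : T.obj₃ ∈ S) :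
    of S h₂ = of S h₁ + of S h₃ := by
  rw [← sub_eq_zero, ← sub_sub]
  exact (QuotientAddGroup.eq_zero_iff _).2 (AddSubgroup.subset_closure ⟨T, hT, h₁, h₂, h₃, rfl⟩)

lemma hom_ext {S : Set C} {G : Type*} [AddCommGroup G] {f g : K0In S →+ G}
    (h : ∀ (X : C) (hX : X ∈ S), f (of S hX) = g (of S hX)) : f = g :=
  QuotientAddGroup.addMonoidHom_ext _ (FreeAbelianGroup.lift_ext _ _ fun X => h X.1 X.2)

end K0In

@[simp]
lemma K0inclusion_of (S : Set C) {X : C} (hX : X ∈ S) :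
    K0inclusion S (K0In.of S hX) = K0.of X := by
  simp [K0inclusion, K0In.of, toK0, K0.of]

lemma sodK0Map_of {n : ℕ} (N : Fin n → Set C) (j : Fin n) {X : C} (hX : X ∈ N j) :
    sodK0Map N (DirectSum.of _ j (K0In.of (N j) hX)) = K0.of X := by
  simp [sodK0Map, K0inclusion_of]

def IsTriangleAdditiveOn {G : Type*} [AddCommGroup G] (S : Set C) (φ : ∀ X, X ∈ S → G) :
    Prop :=
  ∀ T ∈ distTriang C, ∀ (h₁ : T.obj₁ ∈ S) (h₂ : T.obj₂ ∈ S) (h₃ : T.obj₃ ∈ S),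
    φ T.obj₂ h₂ = φ T.obj₁ h₁ + φ T.obj₃ h₃

lemma IsTriangleAdditiveOn.map_isZero {G : Type*} [AddCommGroup G] {S : Set C}
    {φ : ∀ X, X ∈ S → G} (hφ : IsTriangleAdditiveOn S φ) {X : C} (hX : X ∈ S)
    (hz : IsZero X) : φ X hX = 0 := by
  have hT : Triangle.mk (𝟙 X) (0 : X ⟶ X) 0 ∈ distTriang C :=
    (Triangle.distinguished_iff_of_isZero₃ _ hz).2 (inferInstanceAs (IsIso (𝟙 X)))
  simpa using hφ _ hT hX hX hX

lemma K0.of_isZero {X : C} (hX : IsZero X) : K0.of X = 0 :=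
  IsTriangleAdditiveOn.map_isZero (S := Set.univ) (φ := fun X _ => K0.of X)
    (fun T hT _ _ _ => K0.of_obj₂ T hT) (Set.mem_univ X) hX

lemma K0In.of_isZero (S : Set C) {X : C} (hX : X ∈ S) (hz : IsZero X) : K0In.of S hX = 0 :=
  IsTriangleAdditiveOn.map_isZero (φ := fun _ hX => K0In.of S hX) (K0In.of_obj₂ S) hX hz

section Bijective

variable {D : Type*} [Category D]

lemma isIso_of_comp_bijective {X Y : D} (f : X ⟶ Y)
    (hX : Function.Injective fun g : X ⟶ X => g ≫ f)
    (hY : Function.Surjective fun g : Y ⟶ X => g ≫ f) : IsIso f := by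
  obtain ⟨s, hs⟩ := hY (𝟙 Y)
  exact ⟨s, hX (by simp only [Category.assoc, hs, Category.comp_id, Category.id_comp]), hs⟩

lemma isIso_of_precomp_bijective {X Y : D} (f : X ⟶ Y)
    (hY : Function.Injective fun g : Y ⟶ Y => f ≫ g)
    (hX : Function.Surjective fun g : Y ⟶ X => f ≫ g) : IsIso f := by
  obtain ⟨s, hs⟩ := hX (𝟙 X)
  exact ⟨s, hs, hY (by simp only [← Category.assoc, hs, Category.comp_id, Category.id_comp])⟩

variable [Preadditive D]

lemma injective_comp_iff {W X Y : D} (g : X ⟶ Y) :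
    Function.Injective (fun f : W ⟶ X => f ≫ g) ↔ ∀ f : W ⟶ X, f ≫ g = 0 → f = 0 :=
  injective_iff_map_eq_zero (Preadditive.rightComp W g)

lemma injective_precomp_iff {X Y W : D} (g : X ⟶ Y) :
    Function.Injective (fun f : Y ⟶ W => g ≫ f) ↔ ∀ f : Y ⟶ W, g ≫ f = 0 → f = 0 :=
  injective_iff_map_eq_zero (Preadditive.leftComp W g)

lemma bijective_comp_neg_iff {W X Y : D} (g : X ⟶ Y) :
    Function.Bijective (fun f : W ⟶ X => f ≫ (-g)) ↔
      Function.Bijective (fun f : W ⟶ X => f ≫ g) := by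
  have h : (fun f : W ⟶ X => f ≫ (-g)) = (fun f => f ≫ g) ∘ Neg.neg := by
    funext f
    simp
  rw [h, Function.Bijective.of_comp_iff _ neg_bijective]

lemma bijective_neg_comp_iff {X Y W : D} (g : X ⟶ Y) :
    Function.Bijective (fun f : Y ⟶ W => (-g) ≫ f) ↔
      Function.Bijective (fun f : Y ⟶ W => g ≫ f) := by
  have h : (fun f : Y ⟶ W => (-g) ≫ f) = (fun f => g ≫ f) ∘ Neg.neg := by
    funext f
    simp
  rw [h, Function.Bijective.of_comp_iff _ neg_bijective]

end Bijective

lemma distinguished_mk_comp_iso₃ {X Y Z Z' : C} {f₁ : X ⟶ Y} {f₂ : Y ⟶ Z}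
    {f₃ : Z ⟶ X⟦(1 : ℤ)⟧} (h : Triangle.mk f₁ f₂ f₃ ∈ distTriang C) (e : Z ≅ Z') :
    Triangle.mk f₁ (f₂ ≫ e.hom) (e.inv ≫ f₃) ∈ distTriang C :=
  isomorphic_distinguished _ h _ (Triangle.isoMk _ _ (Iso.refl _) (Iso.refl _) e.symm
    (show f₁ ≫ 𝟙 Y = 𝟙 X ≫ f₁ by simp) (show (f₂ ≫ e.hom) ≫ e.inv = 𝟙 Y ≫ f₂ by simp)
    (show (e.inv ≫ f₃) ≫ (𝟙 X)⟦(1 : ℤ)⟧' = e.inv ≫ f₃ by simp))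

namespace CategoryTheory.Pretriangulated.Triangle

variable {T T' : Triangle C}

lemma yoneda_exact₁ (T : Triangle C) (hT : T ∈ distTriang C) {W : C} (f : T.obj₁⟦(1 : ℤ)⟧ ⟶ W)
    (hf : T.mor₃ ≫ f = 0) : ∃ g : T.obj₂⟦(1 : ℤ)⟧ ⟶ W, f = T.mor₁⟦(1 : ℤ)⟧' ≫ g := by
  obtain ⟨g, hg⟩ := yoneda_exact₂ _ (rot_of_distTriang _ (rot_of_distTriang _ hT)) f hf
  exact ⟨-g, hg.trans ((Preadditive.neg_comp _ _).trans (Preadditive.comp_neg _ _).symm)⟩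

lemma bijective_comp_mor₁ (hT : T ∈ distTriang C) {W : C}
    (h₃ : ∀ g : W ⟶ T.obj₃, g = 0) (h₃' : ∀ g : W ⟶ T.obj₃⟦(-1 : ℤ)⟧, g = 0) :
    Function.Bijective fun g : W ⟶ T.obj₁ => g ≫ T.mor₁ := by
  refine ⟨(injective_comp_iff _).2 fun f hf => ?_, fun f => ?_⟩
  · obtain ⟨g, rfl⟩ := coyoneda_exact₂ _ (inv_rot_of_distTriang _ hT) f hf
    obtain rfl : g = 0 := h₃' g
    exact zero_comp
  · obtain ⟨g, rfl⟩ := coyoneda_exact₂ _ hT f (h₃ _)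
    exact ⟨g, rfl⟩

lemma bijective_mor₂_comp (hT : T ∈ distTriang C) {W : C}
    (h₁ : ∀ g : T.obj₁ ⟶ W, g = 0) (h₁' : ∀ g : T.obj₁⟦(1 : ℤ)⟧ ⟶ W, g = 0) :
    Function.Bijective fun g : T.obj₃ ⟶ W => T.mor₂ ≫ g := by
  refine ⟨(injective_precomp_iff _).2 fun f hf => ?_, fun f => ?_⟩
  · obtain ⟨g, rfl⟩ := yoneda_exact₃ _ hT f hf
    obtain rfl : g = 0 := h₁' g
    exact comp_zero
  · obtain ⟨g, rfl⟩ := yoneda_exact₂ _ hT f (h₁ _)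
    exact ⟨g, rfl⟩

/-- The five lemma for `Hom(W, -)`. -/
lemma bijective_comp_hom₃ (φ : T ⟶ T') (hT : T ∈ distTriang C) (hT' : T' ∈ distTriang C)
    {W : C} (h₁ : Function.Surjective fun g : W ⟶ T.obj₁ => g ≫ φ.hom₁)
    (h₂ : Function.Bijective fun g : W ⟶ T.obj₂ => g ≫ φ.hom₂)
    (h₄ : Function.Bijective fun g : W ⟶ T.obj₁⟦(1 : ℤ)⟧ => g ≫ φ.hom₁⟦(1 : ℤ)⟧')
    (h₅ : Function.Injective fun g : W ⟶ T.obj₂⟦(1 : ℤ)⟧ => g ≫ φ.hom₂⟦(1 : ℤ)⟧') :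
    Function.Bijective fun g : W ⟶ T.obj₃ => g ≫ φ.hom₃ := by
  refine ⟨(injective_comp_iff _).2 fun a ha => ?_, fun a' => ?_⟩
  · have ha₃ : a ≫ T.mor₃ = 0 := (injective_comp_iff _).1 h₄.1 _ (by
      rw [Category.assoc, φ.comm₃, ← Category.assoc, ha, zero_comp])
    obtain ⟨b, rfl⟩ := coyoneda_exact₃ _ hT a ha₃
    obtain ⟨c', hc'⟩ := coyoneda_exact₂ _ hT' (b ≫ φ.hom₂) (by
      rw [Category.assoc, ← φ.comm₂, ← Category.assoc, ha])
    obtain ⟨c, rfl⟩ := h₁ c'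
    have hb : c ≫ T.mor₁ = b := h₂.1 (by simp only [Category.assoc, φ.comm₁, hc'])
    rw [← hb, Category.assoc, comp_distTriang_mor_zero₁₂ _ hT, comp_zero]
  · obtain ⟨e, he⟩ : ∃ e, e ≫ φ.hom₁⟦(1 : ℤ)⟧' = a' ≫ T'.mor₃ := h₄.2 _
    obtain ⟨a, rfl⟩ := coyoneda_exact₁ _ hT e ((injective_comp_iff _).1 h₅ _ (by
      simp only [Category.assoc, ← Functor.map_comp, φ.comm₁]
      simp only [Functor.map_comp, ← Category.assoc] at he ⊢
      rw [he, Category.assoc, comp_distTriang_mor_zero₃₁ _ hT', comp_zero]))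
    obtain ⟨d', hd'⟩ := coyoneda_exact₃ _ hT' (a ≫ φ.hom₃ - a') (by
      rw [Preadditive.sub_comp, Category.assoc, ← φ.comm₃, ← Category.assoc, he, sub_self])
    obtain ⟨d, rfl⟩ := h₂.2 d'
    refine ⟨a - d ≫ T.mor₂, ?_⟩
    simp only [Preadditive.sub_comp, Category.assoc, φ.comm₂]
    rw [← Category.assoc, ← hd', sub_sub_cancel]

/-- The five lemma for `Hom(-, W)`. -/
lemma bijective_hom₃_comp (φ : T ⟶ T') (hT : T ∈ distTriang C) (hT' : T' ∈ distTriang C)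
    {W : C} (h₁ : Function.Injective fun g : T'.obj₁ ⟶ W => φ.hom₁ ≫ g)
    (h₂ : Function.Bijective fun g : T'.obj₂ ⟶ W => φ.hom₂ ≫ g)
    (h₄ : Function.Bijective fun g : T'.obj₁⟦(1 : ℤ)⟧ ⟶ W => φ.hom₁⟦(1 : ℤ)⟧' ≫ g)
    (h₅ : Function.Surjective fun g : T'.obj₂⟦(1 : ℤ)⟧ ⟶ W => φ.hom₂⟦(1 : ℤ)⟧' ≫ g) :
    Function.Bijective fun g : T'.obj₃ ⟶ W => φ.hom₃ ≫ g := by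
  refine ⟨(injective_precomp_iff _).2 fun a ha => ?_, fun a' => ?_⟩
  · have ha₂ : T'.mor₂ ≫ a = 0 := (injective_precomp_iff _).1 h₂.1 _ (by
      rw [← Category.assoc, ← φ.comm₂, Category.assoc, ha, comp_zero])
    obtain ⟨b, rfl⟩ := yoneda_exact₃ _ hT' a ha₂
    obtain ⟨c', hc'⟩ := yoneda_exact₁ _ hT (φ.hom₁⟦(1 : ℤ)⟧' ≫ b) (by
      rw [← Category.assoc, φ.comm₃, Category.assoc, ha])
    obtain ⟨c, rfl⟩ := h₅ c'
    have hb : T'.mor₁⟦(1 : ℤ)⟧' ≫ c = b := h₄.1 (by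
      simp only [← Category.assoc, ← Functor.map_comp, ← φ.comm₁]
      rw [hc', Functor.map_comp, Category.assoc])
    rw [← hb, ← Category.assoc, comp_distTriang_mor_zero₃₁ _ hT', zero_comp]
  · obtain ⟨s, hs⟩ : ∃ s, φ.hom₂ ≫ s = T.mor₂ ≫ a' := h₂.2 _
    obtain ⟨t, rfl⟩ := yoneda_exact₂ _ hT' s ((injective_precomp_iff _).1 h₁ _ (by
      rw [← Category.assoc, ← φ.comm₁, Category.assoc, hs, ← Category.assoc,
        comp_distTriang_mor_zero₁₂ _ hT, zero_comp]))
    obtain ⟨u, hu⟩ := yoneda_exact₃ _ hT (φ.hom₃ ≫ t - a') (by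
      rw [Preadditive.comp_sub, ← Category.assoc, φ.comm₂, Category.assoc, hs, sub_self])
    obtain ⟨u', rfl⟩ := h₄.2 u
    refine ⟨t - T'.mor₃ ≫ u', ?_⟩
    simp only [Preadditive.comp_sub, ← Category.assoc, ← φ.comm₃]
    rw [Category.assoc, ← hu, sub_sub_cancel]

end CategoryTheory.Pretriangulated.Triangle

lemma rightOrthogonal_shift {P : Set C} (hP : ∀ (X : C) (n : ℤ), X ∈ P → X⟦n⟧ ∈ P) {A : C}
    (hA : ObjectProperty.rightOrthogonal (· ∈ P) A) (k : ℤ) :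
    ObjectProperty.rightOrthogonal (· ∈ P) (A⟦k⟧) := fun W f hW => by
  obtain ⟨g, rfl⟩ := ((shiftEquiv C k).symm.toAdjunction.homEquiv _ _).surjective f
  simp only [Equivalence.symm_functor, Equivalence.symm_inverse, hA g (hP _ _ hW),
    Adjunction.homEquiv_unit, Functor.comp_obj, Equivalence.toAdjunction_unit,
    Equivalence.symm_unit, Functor.map_zero, comp_zero]
  rfl

structure ExtensionTriangle (P Q : Set C) (X : C) where
  obj₁ : C
  obj₃ : C
  mor₁ : obj₁ ⟶ X
  mor₂ : X ⟶ obj₃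
  mor₃ : obj₃ ⟶ obj₁⟦(1 : ℤ)⟧
  distinguished : Triangle.mk mor₁ mor₂ mor₃ ∈ distTriang C
  mem₁ : obj₁ ∈ P
  mem₃ : obj₃ ∈ Q

def ExtensionTriangle.mono {P P' Q Q' : Set C} {X : C} (D : ExtensionTriangle P Q X)
    (hP : P ⊆ P') (hQ : Q ⊆ Q') : ExtensionTriangle P' Q' X :=
  { D with mem₁ := hP D.mem₁, mem₃ := hQ D.mem₃ }

abbrev TruncationTriangle (P : Set C) (X : C) :=
  ExtensionTriangle P {A | ObjectProperty.rightOrthogonal (· ∈ P) A} X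

namespace ExtensionTriangle

variable {P : Set C} (hP : IsTriangulatedSet P) {X : C}
include hP

lemma bijective_comp_mor₁ (D : TruncationTriangle P X) {W : C} (hW : W ∈ P) :
    Function.Bijective fun g : W ⟶ D.obj₁ => g ≫ D.mor₁ :=
  Triangle.bijective_comp_mor₁ D.distinguished (fun g => D.mem₃ g hW)
    (fun g => rightOrthogonal_shift hP.shift D.mem₃ (-1) g hW)

lemma bijective_comp_shift_mor₁ (D : TruncationTriangle P X) {W : C} (hW : W ∈ P) :
    Function.Bijective fun g : W ⟶ D.obj₁⟦(1 : ℤ)⟧ => g ≫ D.mor₁⟦(1 : ℤ)⟧' := by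
  have hA := rightOrthogonal_shift hP.shift D.mem₃ 1
  have h := Triangle.bijective_comp_mor₁ (Triangle.shift_distinguished _ D.distinguished 1)
    (fun g => hA g hW) (fun g => rightOrthogonal_shift hP.shift hA (-1) g hW)
  replace h : Function.Bijective fun g : W ⟶ D.obj₁⟦(1 : ℤ)⟧ =>
      g ≫ ((1 : ℤ).negOnePow • D.mor₁⟦(1 : ℤ)⟧') := h
  rw [Int.negOnePow_one, Units.neg_smul, one_smul] at h
  exact (bijective_comp_neg_iff _).1 h

lemma bijective_mor₂_comp (D : TruncationTriangle P X) {W : C}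
    (hW : ObjectProperty.rightOrthogonal (· ∈ P) W) :
    Function.Bijective fun g : D.obj₃ ⟶ W => D.mor₂ ≫ g :=
  Triangle.bijective_mor₂_comp D.distinguished (fun g => hW g D.mem₁)
    (fun g => hW g (hP.shift _ 1 D.mem₁))

lemma bijective_shift_mor₂_comp (D : TruncationTriangle P X) {W : C}
    (hW : ObjectProperty.rightOrthogonal (· ∈ P) W) :
    Function.Bijective fun g : D.obj₃⟦(1 : ℤ)⟧ ⟶ W => D.mor₂⟦(1 : ℤ)⟧' ≫ g := by
  have h := Triangle.bijective_mor₂_comp (Triangle.shift_distinguished _ D.distinguished 1)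
    (fun g => hW g (hP.shift _ 1 D.mem₁)) (fun g => hW g (hP.shift _ 1 (hP.shift _ 1 D.mem₁)))
  replace h : Function.Bijective fun g : D.obj₃⟦(1 : ℤ)⟧ ⟶ W =>
      ((1 : ℤ).negOnePow • D.mor₂⟦(1 : ℤ)⟧') ≫ g := h
  rw [Int.negOnePow_one, Units.neg_smul, one_smul] at h
  exact (bijective_neg_comp_iff _).1 h

lemma exists_distTriang_obj₁ {T : Triangle C} (hT : T ∈ distTriang C)
    (D₁ : TruncationTriangle P T.obj₁) (D₂ : TruncationTriangle P T.obj₂)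
    (D₃ : TruncationTriangle P T.obj₃) :
    ∃ (f₁ : D₁.obj₁ ⟶ D₂.obj₁) (f₂ : D₂.obj₁ ⟶ D₃.obj₁) (f₃ : D₃.obj₁ ⟶ D₁.obj₁⟦(1 : ℤ)⟧),
      Triangle.mk f₁ f₂ f₃ ∈ distTriang C := by
  obtain ⟨f₁, hf₁⟩ : ∃ f₁ : D₁.obj₁ ⟶ D₂.obj₁, f₁ ≫ D₂.mor₁ = D₁.mor₁ ≫ T.mor₁ :=
    (D₂.bijective_comp_mor₁ hP D₁.mem₁).2 _
  obtain ⟨Q, f₂, f₃, hQ⟩ := distinguished_cocone_triangle f₁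
  have hQP : Q ∈ P := hP.ext₂ _ (rot_of_distTriang _ hQ) D₂.mem₁ (hP.shift _ 1 D₁.mem₁)
  obtain ⟨q, hq₂, hq₃⟩ :=
    complete_distinguished_triangle_morphism _ _ hQ hT D₁.mor₁ D₂.mor₁ hf₁
  obtain ⟨q', rfl⟩ := (D₃.bijective_comp_mor₁ hP hQP).2 q
  let φ : Triangle.mk f₁ f₂ f₃ ⟶ T := Triangle.homMk _ _ D₁.mor₁ D₂.mor₁ _ hf₁ hq₂ hq₃
  have hq' : ∀ W ∈ P, Function.Bijective fun g : W ⟶ Q => g ≫ q' := fun W hW =>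
    (Function.Bijective.of_comp_iff' (D₃.bijective_comp_mor₁ hP hW) _).1 <| by
      have h : Function.Bijective fun g : W ⟶ Q => g ≫ q' ≫ D₃.mor₁ :=
        Triangle.bijective_comp_hom₃ φ hQ hT
          (D₁.bijective_comp_mor₁ hP hW).2 (D₂.bijective_comp_mor₁ hP hW)
          (D₁.bijective_comp_shift_mor₁ hP hW) (D₂.bijective_comp_shift_mor₁ hP hW).1
      simpa only [Function.comp_def, Category.assoc] using h
  have := isIso_of_comp_bijective q' (hq' Q hQP).1 (hq' _ D₃.mem₁).2
  exact ⟨f₁, f₂ ≫ q', inv q' ≫ f₃, distinguished_mk_comp_iso₃ hQ (asIso q')⟩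

lemma exists_distTriang_obj₃ {T : Triangle C} (hT : T ∈ distTriang C)
    (D₁ : TruncationTriangle P T.obj₁) (D₂ : TruncationTriangle P T.obj₂)
    (D₃ : TruncationTriangle P T.obj₃) :
    ∃ (g₁ : D₁.obj₃ ⟶ D₂.obj₃) (g₂ : D₂.obj₃ ⟶ D₃.obj₃) (g₃ : D₃.obj₃ ⟶ D₁.obj₃⟦(1 : ℤ)⟧),
      Triangle.mk g₁ g₂ g₃ ∈ distTriang C := by
  obtain ⟨g₁, hg₁⟩ : ∃ g₁ : D₁.obj₃ ⟶ D₂.obj₃, D₁.mor₂ ≫ g₁ = T.mor₁ ≫ D₂.mor₂ :=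
    (D₁.bijective_mor₂_comp hP D₂.mem₃).2 _
  obtain ⟨R, g₂, g₃, hR⟩ := distinguished_cocone_triangle g₁
  have hRP : ObjectProperty.rightOrthogonal (· ∈ P) R := fun W φ hW => by
    obtain ⟨σ, rfl⟩ := Triangle.coyoneda_exact₃ _ hR φ
      (rightOrthogonal_shift hP.shift D₁.mem₃ 1 _ hW)
    obtain rfl : σ = 0 := D₂.mem₃ σ hW
    exact zero_comp
  obtain ⟨ζ, hζ₂, hζ₃⟩ :=
    complete_distinguished_triangle_morphism _ _ hT hR D₁.mor₂ D₂.mor₂ hg₁.symm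
  obtain ⟨ζ', rfl⟩ := (D₃.bijective_mor₂_comp hP hRP).2 ζ
  let φ : T ⟶ Triangle.mk g₁ g₂ g₃ := Triangle.homMk _ _ D₁.mor₂ D₂.mor₂ _ hg₁.symm hζ₂ hζ₃
  have hζ' : ∀ W, ObjectProperty.rightOrthogonal (· ∈ P) W →
      Function.Bijective fun g : R ⟶ W => ζ' ≫ g := fun W hW =>
    (Function.Bijective.of_comp_iff' (D₃.bijective_mor₂_comp hP hW) _).1 <| by
      have h : Function.Bijective fun g : R ⟶ W => (D₃.mor₂ ≫ ζ') ≫ g :=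
        Triangle.bijective_hom₃_comp φ hT hR
          (D₁.bijective_mor₂_comp hP hW).1 (D₂.bijective_mor₂_comp hP hW)
          (D₁.bijective_shift_mor₂_comp hP hW) (D₂.bijective_shift_mor₂_comp hP hW).2
      simpa only [Function.comp_def, Category.assoc] using h
  have := isIso_of_precomp_bijective ζ' (hζ' R hRP).1 (hζ' _ D₃.mem₃).2
  exact ⟨g₁, g₂ ≫ inv ζ', ζ' ≫ g₃, distinguished_mk_comp_iso₃ hR (asIso ζ').symm⟩

end ExtensionTriangle

section Filtration

variable {f : ℕ → Set C}

lemma mem_sodFilt_succ_iff {r : ℕ} {X : C} :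
    X ∈ sodFilt f (r + 1) ↔ Nonempty (ExtensionTriangle (f r) (sodFilt f r) X) :=
  ⟨fun ⟨_, _, u, v, w, h, hB, hA⟩ => ⟨⟨_, _, u, v, w, h, hB, hA⟩⟩,
    fun ⟨D⟩ => ⟨_, _, _, _, _, D.distinguished, D.mem₁, D.mem₃⟩⟩

lemma zero_mem_sodFilt {r : ℕ} (h : ∀ m < r, (0 : C) ∈ f m) : (0 : C) ∈ sodFilt f r := by
  induction r with
  | zero => exact isZero_zero C
  | succ r ih =>
    exact ⟨0, 0, 𝟙 0, 0, 0, contractible_distinguished 0, h r r.lt_succ_self,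
      ih fun m hm => h m (hm.trans r.lt_succ_self)⟩

lemma sodFilt_subset_rightOrthogonal {P : Set C} {r : ℕ}
    (h : ∀ m < r, f m ⊆ {A | ObjectProperty.rightOrthogonal (· ∈ P) A}) :
    sodFilt f r ⊆ {A | ObjectProperty.rightOrthogonal (· ∈ P) A} := by
  induction r with
  | zero => exact fun X hX W φ _ => hX.eq_of_tgt _ _
  | succ r ih =>
    rintro X ⟨B, A, u, v, w, hT, hB, hA⟩ W φ hW
    obtain ⟨g, rfl⟩ := Triangle.coyoneda_exact₂ _ hT φ
      (ih (fun m hm => h m (hm.trans r.lt_succ_self)) hA _ hW)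
    obtain rfl : g = 0 := h r r.lt_succ_self hB g hW
    exact zero_comp

end Filtration

section Components

variable {α : Type*} {n : ℕ}

def componentSeq (N : Fin n → Set α) : ℕ → Set α := fun m => if h : m < n then N ⟨m, h⟩ else ∅

variable {N : Fin n → Set α}

lemma lt_of_mem_componentSeq {m : ℕ} {X : α} (h : X ∈ componentSeq N m) : m < n := by
  by_contra hm
  rw [componentSeq, dif_neg hm] at h
  exact h

lemma mem_of_mem_componentSeq {m : ℕ} {X : α} (h : X ∈ componentSeq N m) :
    X ∈ N ⟨m, lt_of_mem_componentSeq h⟩ := by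
  rwa [componentSeq, dif_pos (lt_of_mem_componentSeq h)] at h

lemma mem_componentSeq {j : Fin n} {X : α} (h : X ∈ N j) : X ∈ componentSeq N j := by
  rwa [componentSeq, dif_pos j.isLt]

end Components

section ComponentFiltration

variable {n : ℕ} {N : Fin n → Set C}

lemma zero_mem_sodFilt_componentSeq (htriang : ∀ r, IsTriangulatedSet (N r)) {r : ℕ}
    (hr : r ≤ n) : (0 : C) ∈ sodFilt (componentSeq N) r :=
  zero_mem_sodFilt fun m hm => mem_componentSeq (j := ⟨m, by omega⟩) (htriang _).zero

lemma sodFilt_componentSeq_subset_rightOrthogonal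
    (hsemiorth : ∀ i j : Fin n, i < j → ∀ X Y : C, X ∈ N j → Y ∈ N i → ∀ f : X ⟶ Y, f = 0)
    (j : Fin n) :
    sodFilt (componentSeq N) j ⊆ {A | ObjectProperty.rightOrthogonal (· ∈ N j) A} :=
  sodFilt_subset_rightOrthogonal fun m hm _ hA _ φ hW =>
    hsemiorth ⟨m, lt_of_mem_componentSeq hA⟩ j hm _ _ hW (mem_of_mem_componentSeq hA) φ

end ComponentFiltration

section GradedClass

variable {n : ℕ} (N : Fin n → Set C)

noncomputable def gradedClass :
    (r : ℕ) → (X : C) → X ∈ sodFilt (componentSeq N) r → ⨁ j : Fin n, K0In (N j)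
  | 0, _, _ => 0
  | r + 1, _, hX =>
    let D := (mem_sodFilt_succ_iff.1 hX).some
    DirectSum.of (fun j => K0In (N j)) ⟨r, lt_of_mem_componentSeq D.mem₁⟩
      (K0In.of _ (mem_of_mem_componentSeq D.mem₁)) + gradedClass r D.obj₃ D.mem₃

noncomputable def gradedClassVia {r : ℕ} {X : C}
    (D : ExtensionTriangle (componentSeq N r) (sodFilt (componentSeq N) r) X) :
    ⨁ j : Fin n, K0In (N j) :=
  DirectSum.of (fun j => K0In (N j)) ⟨r, lt_of_mem_componentSeq D.mem₁⟩
    (K0In.of _ (mem_of_mem_componentSeq D.mem₁)) + gradedClass N r D.obj₃ D.mem₃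

lemma gradedClass_succ {r : ℕ} {X : C} (hX : X ∈ sodFilt (componentSeq N) (r + 1)) :
    gradedClass N (r + 1) X hX = gradedClassVia N (mem_sodFilt_succ_iff.1 hX).some :=
  rfl

lemma sodK0Map_gradedClass (r : ℕ) (X : C) (hX : X ∈ sodFilt (componentSeq N) r) :
    sodK0Map N (gradedClass N r X hX) = K0.of X := by
  induction r generalizing X with
  | zero => exact (map_zero _).trans (K0.of_isZero hX).symm
  | succ r ih =>
    rw [gradedClass_succ, gradedClassVia, map_add, sodK0Map_of, ih]
    exact (K0.of_obj₂ _ (mem_sodFilt_succ_iff.1 hX).some.distinguished).symm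

variable {N} (htriang : ∀ r, IsTriangulatedSet (N r))
  (hsemiorth : ∀ i j : Fin n, i < j → ∀ X Y : C, X ∈ N j → Y ∈ N i → ∀ f : X ⟶ Y, f = 0)
include htriang hsemiorth

lemma gradedClassVia_add {r : ℕ}
    (ih : IsTriangleAdditiveOn (sodFilt (componentSeq N) r) (gradedClass N r))
    {T : Triangle C} (hT : T ∈ distTriang C)
    (D₁ : ExtensionTriangle (componentSeq N r) (sodFilt (componentSeq N) r) T.obj₁)
    (D₂ : ExtensionTriangle (componentSeq N r) (sodFilt (componentSeq N) r) T.obj₂)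
    (D₃ : ExtensionTriangle (componentSeq N r) (sodFilt (componentSeq N) r) T.obj₃) :
    gradedClassVia N D₂ = gradedClassVia N D₁ + gradedClassVia N D₃ := by
  have hr : r < n := lt_of_mem_componentSeq D₁.mem₁
  have hP : componentSeq N r ⊆ N ⟨r, hr⟩ := fun _ hX => mem_of_mem_componentSeq hX
  have hQ := sodFilt_componentSeq_subset_rightOrthogonal hsemiorth ⟨r, hr⟩
  obtain ⟨f₁, f₂, f₃, hf⟩ := ExtensionTriangle.exists_distTriang_obj₁ (htriang _) hT
    (D₁.mono hP hQ) (D₂.mono hP hQ) (D₃.mono hP hQ)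
  obtain ⟨g₁, g₂, g₃, hg⟩ := ExtensionTriangle.exists_distTriang_obj₃ (htriang _) hT
    (D₁.mono hP hQ) (D₂.mono hP hQ) (D₃.mono hP hQ)
  have h₁ : K0In.of (N ⟨r, hr⟩) (hP D₂.mem₁) =
      K0In.of _ (hP D₁.mem₁) + K0In.of _ (hP D₃.mem₁) :=
    K0In.of_obj₂ _ _ hf _ _ _
  have h₃ : gradedClass N r D₂.obj₃ D₂.mem₃ =
      gradedClass N r D₁.obj₃ D₁.mem₃ + gradedClass N r D₃.obj₃ D₃.mem₃ :=
    ih _ hg _ _ _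
  rw [gradedClassVia, gradedClassVia, gradedClassVia, h₃, h₁, map_add]
  abel

lemma gradedClass_isTriangleAdditiveOn (r : ℕ) :
    IsTriangleAdditiveOn (sodFilt (componentSeq N) r) (gradedClass N r) := by
  induction r with
  | zero => exact fun _ _ _ _ _ => (add_zero 0).symm
  | succ r ih =>
    exact fun _ hT _ _ _ => gradedClassVia_add htriang hsemiorth ih hT _ _ _

lemma gradedClassVia_eq_gradedClass {r : ℕ} {X : C}
    (D : ExtensionTriangle (componentSeq N r) (sodFilt (componentSeq N) r) X)
    (hX : X ∈ sodFilt (componentSeq N) (r + 1)) :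
    gradedClassVia N D = gradedClass N (r + 1) X hX := by
  have hr : r < n := lt_of_mem_componentSeq D.mem₁
  have h0 : (0 : C) ∈ sodFilt (componentSeq N) r :=
    zero_mem_sodFilt_componentSeq htriang hr.le
  let D₀ : ExtensionTriangle (componentSeq N r) (sodFilt (componentSeq N) r) (0 : C) :=
    ⟨0, 0, 𝟙 0, 0, 0, contractible_distinguished 0,
      mem_componentSeq (j := ⟨r, hr⟩) (htriang _).zero, h0⟩
  have hD₀ : gradedClassVia N D₀ = 0 := by
    rw [gradedClassVia, K0In.of_isZero _ _ (isZero_zero C), map_zero, zero_add]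
    exact (gradedClass_isTriangleAdditiveOn htriang hsemiorth r).map_isZero h0 (isZero_zero C)
  -- compare `D` with the chosen triangle along the distinguished triangle `X → X → 0`
  calc gradedClassVia N D
      = gradedClassVia N (mem_sodFilt_succ_iff.1 hX).some + gradedClassVia N D₀ :=
        gradedClassVia_add htriang hsemiorth (gradedClass_isTriangleAdditiveOn htriang hsemiorth r)
          (contractible_distinguished X) _ D D₀
    _ = gradedClass N (r + 1) X hX := by rw [hD₀, add_zero, gradedClass_succ]

lemma gradedClass_of_mem (j : Fin n) {X : C} (hX : X ∈ N j) (r : ℕ) (hjr : (j : ℕ) < r)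
    (hrn : r ≤ n) : ∃ h : X ∈ sodFilt (componentSeq N) r,
      gradedClass N r X h = DirectSum.of (fun j => K0In (N j)) j (K0In.of _ hX) := by
  induction r with
  | zero => exact absurd hjr (Nat.not_lt_zero _)
  | succ r ih =>
    have h0 : (0 : C) ∈ sodFilt (componentSeq N) r :=
      zero_mem_sodFilt_componentSeq htriang (by omega)
    rcases Nat.lt_succ_iff_lt_or_eq.1 hjr with hj | rfl
    · obtain ⟨hXr, e⟩ := ih hj (by omega)
      let D : ExtensionTriangle (componentSeq N r) (sodFilt (componentSeq N) r) X :=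
        ⟨0, X, 0, 𝟙 X, 0, contractible_distinguished₁ X,
          mem_componentSeq (j := ⟨r, by omega⟩) (htriang _).zero, hXr⟩
      refine ⟨mem_sodFilt_succ_iff.2 ⟨D⟩, ?_⟩
      rw [← gradedClassVia_eq_gradedClass htriang hsemiorth D, gradedClassVia,
        K0In.of_isZero _ _ (isZero_zero C), map_zero, zero_add]
      exact e
    · let D : ExtensionTriangle (componentSeq N j) (sodFilt (componentSeq N) j) X :=
        ⟨X, 0, 𝟙 X, 0, 0, contractible_distinguished X, mem_componentSeq hX, h0⟩
      refine ⟨mem_sodFilt_succ_iff.2 ⟨D⟩, ?_⟩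
      rw [← gradedClassVia_eq_gradedClass htriang hsemiorth D, gradedClassVia,
        (gradedClass_isTriangleAdditiveOn htriang hsemiorth j).map_isZero h0 (isZero_zero C),
        add_zero]

end GradedClass

/-- If a triangulated category `C` has a semi-orthogonal decomposition
`C = ⟨N₁, …, Nₙ⟩`, then the Grothendieck group decomposes as
`K₀(C) ≅ K₀(N₁) ⊕ ⋯ ⊕ K₀(Nₙ)`, the isomorphism being induced by the inclusions. -/
theorem k0_direct_sum_of_sod {n : ℕ} (N : Fin n → Set C)
    (htriang : ∀ r, IsTriangulatedSet (N r))
    (hsemiorth : ∀ i j : Fin n, i < j → ∀ X Y : C, X ∈ N j → Y ∈ N i →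
      ∀ f : X ⟶ Y, f = 0)
    (hfilt : ∀ X : C, X ∈ sodFilt (fun m => if h : m < n then N ⟨m, h⟩ else ∅) n) :
    Function.Bijective (sodK0Map N) := by
  let ψ : K0 C →+ ⨁ j : Fin n, K0In (N j) :=
    K0.lift (fun X => gradedClass N n X (hfilt X)) fun T hT =>
      gradedClass_isTriangleAdditiveOn htriang hsemiorth n T hT _ _ _
  refine (AddMonoidHom.toAddEquiv (sodK0Map N) ψ ?_ ?_).bijective
  · refine DirectSum.addHom_ext' fun j => K0In.hom_ext fun X hX => ?_
    obtain ⟨_, e⟩ := gradedClass_of_mem htriang hsemiorth j hX n j.isLt le_rfl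
    simpa [ψ, K0.lift_of, sodK0Map_of] using e
  · exact K0.hom_ext fun X => by simpa [ψ] using sodK0Map_gradedClass N n X (hfilt X)
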